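/- arXiv:1809.09393 — 2 statements merged into one kernel-verified Lean document; each statement's English description precedes it below -/
import Mathlib

section
/- If h is a harmonic function on the Sierpiński gasket whose values at the vertices of a triangular cell satisfy the '1/5-2/5' subdivision rule, and if |h(x)-h(y)| ≤ (6/5)^m ‖x-y‖ for every pair of vertices x, y of that level-m cell, then for every pair of vertices x̃, ỹ lying in a common level-(m+1) subcell of that cell, |h(x̃)-h(ỹ)| ≤ (6/5)^{m+1} ‖x̃-ỹ‖. -/
noncomputable section

open Metric Set Filter Topology

/-- The plane with the Euclidean norm. -/
abbrev E2 := EuclideanSpace ℝ (Fin 2)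

/-- The contraction `L_i(x) = (x - q_i)/2 + q_i` towards the vertex `q i`. -/
def Lmap (q : Fin 3 → E2) (i : Fin 3) (x : E2) : E2 := midpoint ℝ x (q i)

/-- Composite map `L_ω = L_{w₁} ∘ ⋯ ∘ L_{wₙ}` for a word `ω`. -/
def Lw (q : Fin 3 → E2) : List (Fin 3) → E2 → E2
  | [] => id
  | i :: w => Lmap q i ∘ Lw q w

/-- The three vertices of the cell indexed by the word `w`. -/
def cellVerts (q : Fin 3 → E2) (w : List (Fin 3)) : Set E2 :=
  Lw q w '' {q 0, q 1, q 2}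

/-- `x ∼ₘ y` : `x` and `y` are vertices of a common level-`m` cell. -/
def SameCell (q : Fin 3 → E2) (m : ℕ) (x y : E2) : Prop :=
  ∃ w : List (Fin 3), w.length = m ∧ x ∈ cellVerts q w ∧ y ∈ cellVerts q w

/-- The Sierpiński gasket: closure of the set of all vertices of all cells. -/
def gasket (q : Fin 3 → E2) : Set E2 :=
  closure (⋃ w : List (Fin 3), cellVerts q w)

/-- `q₁, q₂, q₃` are equidistant points. -/
def Equidistant (q : Fin 3 → E2) : Prop :=
  ∀ i j, i ≠ j → dist (q i) (q j) = 1

/-- A function is harmonic iff its vertex values satisfy the "1/5-2/5" rule on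
every cell: `h(q_{ωij}) = (2/5) h(q_{ωi}) + (2/5) h(q_{ωj}) + (1/5) h(q_{ωk})`. -/
def Harmonic (q : Fin 3 → E2) (h : E2 → ℝ) : Prop :=
  ∀ w : List (Fin 3), ∀ i j k : Fin 3, i ≠ j → j ≠ k → i ≠ k →
    h (Lw q w (midpoint ℝ (q i) (q j))) =
      2/5 * h (Lw q w (q i)) + 2/5 * h (Lw q w (q j)) + 1/5 * h (Lw q w (q k))

lemma midpoint_sub' (u v c : E2) :
    midpoint ℝ u c - midpoint ℝ v c = (2:ℝ)⁻¹ • (u - v) := by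
  rw [midpoint_eq_smul_add, midpoint_eq_smul_add, ← smul_sub]
  rw [invOf_eq_inv]
  congr 1
  abel

lemma Lw_norm (q : Fin 3 → E2) (w : List (Fin 3)) (x y : E2) :
    ‖Lw q w x - Lw q w y‖ = (1/2:ℝ) ^ w.length * ‖x - y‖ := by
  induction w with
  | nil => simp [Lw]
  | cons i w ih =>
    show ‖Lmap q i (Lw q w x) - Lmap q i (Lw q w y)‖ = _
    rw [Lmap, Lmap, midpoint_sub', norm_smul, ih]
    simp [pow_succ]
    ring

lemma Lw_append_single (q : Fin 3 → E2) (w : List (Fin 3)) (i : Fin 3) (x : E2) :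
    Lw q (w ++ [i]) x = Lw q w (midpoint ℝ x (q i)) := by
  induction w with
  | nil => rfl
  | cons a w ih => show Lmap q a (Lw q (w ++ [i]) x) = _; rw [ih]; rfl

lemma mem_cellVerts (q : Fin 3 → E2) (w : List (Fin 3)) (x : E2)
    (hx : x ∈ cellVerts q w) : ∃ j : Fin 3, x = Lw q w (q j) := by
  obtain ⟨v, hv, rfl⟩ := hx
  simp only [Set.mem_insert_iff, Set.mem_singleton_iff] at hv
  rcases hv with rfl | rfl | rfl
  exacts [⟨0, rfl⟩, ⟨1, rfl⟩, ⟨2, rfl⟩]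

lemma Lw_q_mem (q : Fin 3 → E2) (w : List (Fin 3)) (a : Fin 3) :
    Lw q w (q a) ∈ cellVerts q w := by
  refine ⟨q a, ?_, rfl⟩
  fin_cases a <;> simp

def thd (i k : Fin 3) : Fin 3 := -(i + k)

lemma thd_ne_left : ∀ {i k : Fin 3}, i ≠ k → thd i k ≠ i := by decide
lemma thd_ne_right : ∀ {i k : Fin 3}, i ≠ k → thd i k ≠ k := by decide

lemma abs_combo1 {a b c D : ℝ} (h1 : |a - b| ≤ D) (h2 : |a - c| ≤ D) :
    |a - (2/5 * b + 2/5 * a + 1/5 * c)| ≤ 3/5 * D := by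
  rw [abs_le] at *
  constructor <;> linarith [h1.1, h1.2, h2.1, h2.2]

lemma abs_combo2 {a b c D : ℝ} (hD : 0 ≤ D) (hbc : |b - c| ≤ D) :
    |(2/5 * b + 2/5 * a + 1/5 * c) - (2/5 * c + 2/5 * a + 1/5 * b)| ≤ 3/5 * D := by
  rw [abs_le] at *
  constructor <;> linarith [hbc.1, hbc.2]

/-- If `h` is harmonic on the Sierpiński gasket (its vertex values
satisfy the 1/5-2/5 rule) and `|h(x) - h(y)| ≤ (6/5)^m ‖x - y‖` for every pair of
vertices of a fixed level-`m` cell, then for every pair of vertices lying in a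
common level-`(m+1)` subcell of that cell,
`|h(x̃) - h(ỹ)| ≤ (6/5)^{m+1} ‖x̃ - ỹ‖`. -/
theorem harmonic_osc_step (q : Fin 3 → E2) (hq : Equidistant q)
    (h : E2 → ℝ) (hh : Harmonic q h) (m : ℕ) (w : List (Fin 3)) (hw : w.length = m)
    (hbound : ∀ x ∈ cellVerts q w, ∀ y ∈ cellVerts q w,
      |h x - h y| ≤ (6/5 : ℝ) ^ m * ‖x - y‖) :
    ∀ i : Fin 3, ∀ x ∈ cellVerts q (w ++ [i]), ∀ y ∈ cellVerts q (w ++ [i]),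
      |h x - h y| ≤ (6/5 : ℝ) ^ (m + 1) * ‖x - y‖ := by
  intro i x hx y hy
  obtain ⟨j, rfl⟩ := mem_cellVerts q _ x hx
  obtain ⟨k, rfl⟩ := mem_cellVerts q _ y hy
  rw [Lw_append_single, Lw_append_single]
  by_cases hjk : j = k
  · subst hjk; simp
  -- pairwise bound at level m
  set D : ℝ := (3/5 : ℝ) ^ m with hD_def
  have hD : (0:ℝ) ≤ D := by positivity
  have key : ∀ a b : Fin 3, a ≠ b →
      |h (Lw q w (q a)) - h (Lw q w (q b))| ≤ D := by
    intro a b hab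
    have h1 := hbound _ (Lw_q_mem q w a) _ (Lw_q_mem q w b)
    have h2 : ‖Lw q w (q a) - Lw q w (q b)‖ = (1/2:ℝ) ^ m := by
      rw [Lw_norm, hw, ← dist_eq_norm, hq a b hab, mul_one]
    rw [h2] at h1
    calc |h (Lw q w (q a)) - h (Lw q w (q b))| ≤ (6/5:ℝ)^m * (1/2:ℝ)^m := h1
      _ = D := by rw [hD_def, ← mul_pow]; norm_num
  -- distance between the two subcell vertices
  have hnorm : ‖Lw q w (midpoint ℝ (q j) (q i)) - Lw q w (midpoint ℝ (q k) (q i))‖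
      = (1/2:ℝ) ^ (m + 1) := by
    rw [Lw_norm, hw, midpoint_sub', norm_smul, ← dist_eq_norm, hq j k hjk]
    simp [pow_succ]
  rw [hnorm]
  have hrhs : (6/5 : ℝ) ^ (m + 1) * (1/2:ℝ) ^ (m+1) = 3/5 * D := by
    rw [hD_def, ← mul_pow, pow_succ]
    norm_num
    ring
  rw [hrhs]
  by_cases hji : j = i
  · subst hji
    rw [midpoint_self]
    have hki : k ≠ j := fun e => hjk e.symm
    rw [hh w k j (thd j k) hki (Ne.symm (thd_ne_left hjk)) (Ne.symm (thd_ne_right hjk))]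
    exact abs_combo1 (key j k hjk) (key j (thd j k) (Ne.symm (thd_ne_left hjk)))
  · by_cases hki : k = i
    · subst hki
      rw [midpoint_self, abs_sub_comm]
      have hjk' : k ≠ j := fun e => hjk e.symm
      rw [hh w j k (thd k j) hji (Ne.symm (thd_ne_left hjk')) (Ne.symm (thd_ne_right hjk'))]
      exact abs_combo1 (key k j hjk') (key k (thd k j) (Ne.symm (thd_ne_left hjk')))
    · rw [hh w j i k hji (fun e => hki e.symm) hjk,
          hh w k i j hki (fun e => hji e.symm) (fun e => hjk e.symm)]
      exact abs_combo2 hD (key j k hjk)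
end
end

section
/- Let f ∈ dom(E) on the Sierpiński gasket, let T : C(S) → C(S) be a bounded linear operator fixing boundary values (T(f)(q_i) = f(q_i), i=1,2,3), let n ∈ ℕ be fixed and let α = {α_ω : ω ∈ Σ^(n)} be scaling factors with ‖α‖_∞ ≤ 1/√(3·5ⁿ). Suppose f^α is a continuous function satisfying the self-referential equation f^α(x) = f(x) + α_ω·(f^α − T(f))∘L_ω^{-1}(x) for all x ∈ L_ω(S), ω ∈ Σ^(n), and suppose T(f) ∈ dom(E). Then E(f^α)·(1 − 3·5ⁿ‖α‖²) ≤ E(f)·(3 + 3·5ⁿ‖α‖²‖T‖); in particular f^α ∈ dom(E), i.e., E(f^α) < ∞. -/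
noncomputable section

open Metric Set Filter Topology

/-- The `m`-th level renormalized energy
`E^{(m)}(u) = (5/3)^m ∑_{x ∼ₘ y} |u(x) - u(y)|²`, the inner sum ranging over the
three edges of each of the `3^m` level-`m` cells. -/
noncomputable def energyM (q : Fin 3 → E2) (u : E2 → ℝ) (m : ℕ) : ℝ :=
  (5/3 : ℝ) ^ m * ∑ w : Fin m → Fin 3,
    ∑ p ∈ ({((0 : Fin 3), (1 : Fin 3)), (0, 2), (1, 2)} : Finset (Fin 3 × Fin 3)),
      (u (Lw q (List.ofFn w) (q p.1)) - u (Lw q (List.ofFn w) (q p.2))) ^ 2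

/-!
Energy is self-similar: `E_{m+n}(u) = (5/3)ⁿ ∑_ω E_m(u ∘ L_ω)`. On the vertices of the gasket the
self-referential equation reads `fα ∘ L_ω = f ∘ L_ω + α_ω (fα - Tf)`, so a weighted
inequality `(x + y - z)² ≤ K₁x² + K₂y² + K₃z²` applied edge by edge gives
`E_{m+n}(fα) ≤ K₁ E_{m+n}(f) + 5ⁿ‖α‖² (K₂ E_m(fα) + K₃ E_m(Tf))`.
Since `m ↦ E_m` is monotone, the weights `(4, 2, 4)` bound `E_m(fα)`, so it converges even when
`3·5ⁿ‖α‖² = 1`; the weights `(3, 3, 3)` give the stated inequality in the limit `m → ∞`.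
-/

theorem sum_ofFn_succ {α M : Type*} [Fintype α] [AddCommMonoid M] (k : ℕ) (g : List α → M) :
    ∑ w : Fin (k + 1) → α, g (List.ofFn w) = ∑ i, ∑ w : Fin k → α, g (i :: List.ofFn w) := by
  rw [← (Fin.consEquiv fun _ => α).sum_comp, Fintype.sum_prod_type]
  simp [Fin.consEquiv, List.ofFn_succ]

def cellEnergy (q : Fin 3 → E2) (u : E2 → ℝ) (w : List (Fin 3)) : ℝ :=
  ∑ p ∈ ({((0 : Fin 3), (1 : Fin 3)), (0, 2), (1, 2)} : Finset (Fin 3 × Fin 3)),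
    (u (Lw q w (q p.1)) - u (Lw q w (q p.2))) ^ 2

theorem energyM_eq_sum_cellEnergy (q : Fin 3 → E2) (u : E2 → ℝ) (m : ℕ) :
    energyM q u m = (5 / 3 : ℝ) ^ m * ∑ w : Fin m → Fin 3, cellEnergy q u (List.ofFn w) :=
  rfl

theorem cellEnergy_cons (q : Fin 3 → E2) (u : E2 → ℝ) (i : Fin 3) (w : List (Fin 3)) :
    cellEnergy q u (i :: w) = cellEnergy q (u ∘ Lmap q i) w :=
  rfl

theorem energyM_nonneg (q : Fin 3 → E2) (u : E2 → ℝ) (m : ℕ) : 0 ≤ energyM q u m := by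
  unfold energyM
  positivity

theorem energyM_succ (q : Fin 3 → E2) (u : E2 → ℝ) (m : ℕ) :
    energyM q u (m + 1) = 5 / 3 * ∑ i, energyM q (u ∘ Lmap q i) m := by
  simp only [energyM_eq_sum_cellEnergy, sum_ofFn_succ (g := cellEnergy q u), cellEnergy_cons,
    Finset.mul_sum, pow_succ', mul_assoc]

theorem energyM_add (q : Fin 3 → E2) (n : ℕ) (u : E2 → ℝ) (m : ℕ) :
    energyM q u (n + m) =
      (5 / 3 : ℝ) ^ n * ∑ ω : Fin n → Fin 3, energyM q (u ∘ Lw q (List.ofFn ω)) m := by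
  induction n generalizing u with
  | zero => simp [Lw]
  | succ k ih =>
    rw [add_right_comm, energyM_succ, sum_ofFn_succ (g := fun w => energyM q (u ∘ Lw q w) m)]
    simp only [ih, Lw, Function.comp_assoc, Finset.mul_sum, pow_succ', mul_assoc]

theorem energyM_zero (q : Fin 3 → E2) (u : E2 → ℝ) :
    energyM q u 0 =
      (u (q 0) - u (q 1)) ^ 2 + (u (q 0) - u (q 2)) ^ 2 + (u (q 1) - u (q 2)) ^ 2 := by
  simp [energyM, Lw, add_assoc]

-- `5/3` is the renormalization for which the least `E₁` over the midpoint values, attained at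
-- the harmonic (1/5–2/5) extension, equals `E₀`; the three squares certify `E₁ - E₀ ≥ 0`.
theorem energyM_zero_le_one (q : Fin 3 → E2) (u : E2 → ℝ) : energyM q u 0 ≤ energyM q u 1 := by
  rw [energyM_succ, Fin.sum_univ_three, energyM_zero, energyM_zero, energyM_zero, energyM_zero]
  simp only [Function.comp_apply, Lmap, midpoint_self, midpoint_comm (q 1) (q 0),
    midpoint_comm (q 2) (q 0), midpoint_comm (q 2) (q 1)]
  set a := u (q 0)
  set b := u (q 1)
  set c := u (q 2)
  set x := u (midpoint ℝ (q 0) (q 1))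
  set y := u (midpoint ℝ (q 0) (q 2))
  set z := u (midpoint ℝ (q 1) (q 2))
  nlinarith [sq_nonneg (4*a+3*b+3*c-5*x-5*y), sq_nonneg (7*b+3*c-5*x+15*y-20*z),
    sq_nonneg (c+3*x-2*y-2*z)]

theorem energyM_monotone (q : Fin 3 → E2) (u : E2 → ℝ) : Monotone (energyM q u) := by
  refine monotone_nat_of_le_succ fun m => ?_
  change energyM q u (m + 0) ≤ energyM q u (m + 1)
  rw [energyM_add, energyM_add]
  gcongr with ω
  exact energyM_zero_le_one q _

theorem energyM_const_mul (q : Fin 3 → E2) (c : ℝ) (u : E2 → ℝ) (m : ℕ) :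
    energyM q (fun x => c * u x) m = c ^ 2 * energyM q u m := by
  unfold energyM
  rw [mul_left_comm, Finset.mul_sum]
  simp only [Finset.mul_sum, ← mul_sub, mul_pow]

theorem energyM_le_of_vertex_eq (q : Fin 3 → E2) {g a b c : E2 → ℝ} {K₁ K₂ K₃ : ℝ}
    (hK : ∀ x y z : ℝ, (x + y - z) ^ 2 ≤ K₁ * x ^ 2 + K₂ * y ^ 2 + K₃ * z ^ 2)
    (h : ∀ w i, g (Lw q w (q i)) = a (Lw q w (q i)) + b (Lw q w (q i)) - c (Lw q w (q i)))
    (m : ℕ) :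
    energyM q g m ≤ K₁ * energyM q a m + K₂ * energyM q b m + K₃ * energyM q c m := by
  have hcell : ∀ w, cellEnergy q g w ≤
      K₁ * cellEnergy q a w + K₂ * cellEnergy q b w + K₃ * cellEnergy q c w := by
    intro w
    simp only [cellEnergy, Finset.mul_sum, ← Finset.sum_add_distrib]
    gcongr with p
    rw [h, h]
    refine (le_of_eq ?_).trans (hK (a (Lw q w (q p.1)) - a (Lw q w (q p.2)))
      (b (Lw q w (q p.1)) - b (Lw q w (q p.2))) (c (Lw q w (q p.1)) - c (Lw q w (q p.2))))
    ring
  simp only [energyM_eq_sum_cellEnergy]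
  calc _ ≤ (5 / 3 : ℝ) ^ m * ∑ w : Fin m → Fin 3, (K₁ * cellEnergy q a (List.ofFn w) +
        K₂ * cellEnergy q b (List.ofFn w) + K₃ * cellEnergy q c (List.ofFn w)) := by
        gcongr with w
        exact hcell _
    _ = _ := by simp only [Finset.sum_add_distrib, ← Finset.mul_sum]; ring

theorem Lw_vertex_mem_gasket (q : Fin 3 → E2) (w : List (Fin 3)) (i : Fin 3) :
    Lw q w (q i) ∈ gasket q := by
  refine subset_closure (mem_iUnion.2 ⟨w, q i, ?_, rfl⟩)
  fin_cases i <;> simp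

theorem energyM_add_le_of_selfReferential (q : Fin 3 → E2) {n : ℕ} {α : (Fin n → Fin 3) → ℝ}
    {f Tf fα : E2 → ℝ} {A : ℝ} (hαA : ∀ ω, |α ω| ≤ A)
    (hself : ∀ ω : Fin n → Fin 3, ∀ x ∈ gasket q,
      fα (Lw q (List.ofFn ω) x) = f (Lw q (List.ofFn ω) x) + α ω * (fα x - Tf x))
    {K₁ K₂ K₃ : ℝ} (hK₂ : 0 ≤ K₂) (hK₃ : 0 ≤ K₃)
    (hK : ∀ x y z : ℝ, (x + y - z) ^ 2 ≤ K₁ * x ^ 2 + K₂ * y ^ 2 + K₃ * z ^ 2) (m : ℕ) :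
    energyM q fα (m + n) ≤
      K₁ * energyM q f (m + n) + 5 ^ n * A ^ 2 * (K₂ * energyM q fα m + K₃ * energyM q Tf m) := by
  have hcell : ∀ ω : Fin n → Fin 3, energyM q (fα ∘ Lw q (List.ofFn ω)) m ≤
      K₁ * energyM q (f ∘ Lw q (List.ofFn ω)) m +
        A ^ 2 * (K₂ * energyM q fα m + K₃ * energyM q Tf m) := by
    intro ω
    have hvert := energyM_le_of_vertex_eq q hK (g := fα ∘ Lw q (List.ofFn ω))
      (a := f ∘ Lw q (List.ofFn ω)) (b := fun x => α ω * fα x) (c := fun x => α ω * Tf x)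
      (fun w i => by
        simp only [Function.comp_apply, hself ω _ (Lw_vertex_mem_gasket q w i)]
        ring) m
    have hα : α ω ^ 2 ≤ A ^ 2 := sq_le_sq' (neg_le_of_abs_le (hαA ω)) (le_of_abs_le (hαA ω))
    rw [energyM_const_mul, energyM_const_mul] at hvert
    nlinarith [mul_le_mul_of_nonneg_right hα (energyM_nonneg q fα m),
      mul_le_mul_of_nonneg_right hα (energyM_nonneg q Tf m)]
  rw [add_comm, energyM_add, energyM_add]
  calc _ ≤ (5 / 3 : ℝ) ^ n * ∑ ω : Fin n → Fin 3, (K₁ * energyM q (f ∘ Lw q (List.ofFn ω)) m +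
        A ^ 2 * (K₂ * energyM q fα m + K₃ * energyM q Tf m)) := by
        gcongr with ω
        exact hcell ω
    _ = _ := by
        rw [Finset.sum_add_distrib, ← Finset.mul_sum, Finset.sum_const, Finset.card_univ,
          Fintype.card_fun, Fintype.card_fin, Fintype.card_fin, nsmul_eq_mul, div_pow]
        push_cast
        field_simp

theorem mul_sq_le_one_of_le_one_div_sqrt {c A : ℝ} (hc : 0 < c) (hA : 0 ≤ A)
    (h : A ≤ 1 / √c) : c * A ^ 2 ≤ 1 := by
  calc c * A ^ 2 ≤ c * (1 / √c) ^ 2 := by gcongr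
    _ = 1 := by rw [div_pow, Real.sq_sqrt hc.le]; field_simp

theorem bddAbove_energyM_of_selfReferential (q : Fin 3 → E2) {n : ℕ}
    {α : (Fin n → Fin 3) → ℝ} {f Tf fα : E2 → ℝ} {A : ℝ} (hαA : ∀ ω, |α ω| ≤ A)
    (hA : 3 * 5 ^ n * A ^ 2 ≤ 1)
    (hself : ∀ ω : Fin n → Fin 3, ∀ x ∈ gasket q,
      fα (Lw q (List.ofFn ω) x) = f (Lw q (List.ofFn ω) x) + α ω * (fα x - Tf x))
    (hf : BddAbove (range (energyM q f))) (hTf : BddAbove (range (energyM q Tf))) :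
    BddAbove (range (energyM q fα)) := by
  obtain ⟨Cf, hCf⟩ := hf
  obtain ⟨CT, hCT⟩ := hTf
  refine ⟨12 * Cf + 4 * CT, forall_mem_range.2 fun m => ?_⟩
  -- `(x + y - z)² ≤ 4x² + 2y² + 4z²` leaves `E_m(fα)` with coefficient `2·5ⁿA² ≤ 2/3 < 1`.
  have hrec := energyM_add_le_of_selfReferential q hαA hself (K₁ := 4) (K₂ := 2) (K₃ := 4)
    (by norm_num) (by norm_num)
    (fun x y z => by nlinarith [sq_nonneg (3 * x - y + z), sq_nonneg (y + 2 * z)]) m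
  have hmono : energyM q fα m ≤ energyM q fα (m + n) := energyM_monotone q fα (by omega)
  have hf_le : energyM q f (m + n) ≤ Cf := hCf ⟨m + n, rfl⟩
  have hTf_le : energyM q Tf m ≤ CT := hCT ⟨m, rfl⟩
  nlinarith [mul_le_mul_of_nonneg_right hA (energyM_nonneg q fα m),
    mul_le_mul_of_nonneg_right hA (energyM_nonneg q Tf m)]

theorem alpha_fractal_finite_energy_general (q : Fin 3 → E2)
    (n : ℕ) (α : (Fin n → Fin 3) → ℝ) (f Tf fα : E2 → ℝ)
    (Tnorm : ℝ)
    (A : ℝ)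
    (hA : A = Finset.univ.sup' Finset.univ_nonempty (fun ω : Fin n → Fin 3 => |α ω|))
    (hAle : A ≤ 1 / Real.sqrt (3 * 5 ^ n))
    (hself : ∀ ω : Fin n → Fin 3, ∀ x ∈ gasket q,
      fα (Lw q (List.ofFn ω) x) = f (Lw q (List.ofFn ω) x) + α ω * (fα x - Tf x))
    (Ef ETf : ℝ)
    (hEf : Tendsto (energyM q f) atTop (𝓝 Ef))
    (hETf : Tendsto (energyM q Tf) atTop (𝓝 ETf))
    (hTbound : ETf ≤ Tnorm * Ef) :
    ∃ Efα : ℝ, Tendsto (energyM q fα) atTop (𝓝 Efα) ∧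
      Efα * (1 - 3 * 5 ^ n * A ^ 2) ≤ Ef * (3 + 3 * 5 ^ n * A ^ 2 * Tnorm) := by
  have hαA : ∀ ω, |α ω| ≤ A := fun ω => hA ▸ Finset.le_sup' (fun ω => |α ω|) (Finset.mem_univ ω)
  have hA1 : 3 * 5 ^ n * A ^ 2 ≤ 1 :=
    mul_sq_le_one_of_le_one_div_sqrt (by positivity) ((abs_nonneg _).trans (hαA 0)) hAle
  have hconv : Tendsto (energyM q fα) atTop (𝓝 (⨆ m, energyM q fα m)) :=
    tendsto_atTop_ciSup (energyM_monotone q fα) (bddAbove_energyM_of_selfReferential q hαA hA1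
      hself hEf.bddAbove_range hETf.bddAbove_range)
  refine ⟨_, hconv, ?_⟩
  set Efα := ⨆ m, energyM q fα m
  have hlim : Efα ≤ 3 * Ef + 5 ^ n * A ^ 2 * (3 * Efα + 3 * ETf) :=
    le_of_tendsto_of_tendsto' ((tendsto_add_atTop_iff_nat n).2 hconv)
      ((((tendsto_add_atTop_iff_nat n).2 hEf).const_mul 3).add
        (((hconv.const_mul 3).add (hETf.const_mul 3)).const_mul _))
      (energyM_add_le_of_selfReferential q hαA hself (K₁ := 3) (K₂ := 3) (K₃ := 3)
        (by norm_num) (by norm_num)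
        (fun x y z => by nlinarith [sq_nonneg (x - y), sq_nonneg (x + z), sq_nonneg (y + z)]))
  nlinarith [mul_le_mul_of_nonneg_left hTbound (by positivity : (0 : ℝ) ≤ 3 * 5 ^ n * A ^ 2)]

/-- Let `f ∈ dom(E)`, let `Tf` be the image of `f` under a bounded
linear operator fixing boundary values (so that `E(Tf) ≤ ‖T‖ E(f)`), fix `n ∈ ℕ` and
scaling factors `α = (α_ω)_{ω ∈ Σ⁽ⁿ⁾}` with `‖α‖_∞ ≤ 1/√(3·5ⁿ)`, and let `f^α` be a
continuous function satisfying the self-referential equation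
`f^α(x) = f(x) + α_ω (f^α - Tf)(L_ω⁻¹ x)` for all `x ∈ L_ω(S)`, `ω ∈ Σ⁽ⁿ⁾`. If
`Tf ∈ dom(E)`, then `E(f^α) (1 - 3·5ⁿ ‖α‖²) ≤ E(f) (3 + 3·5ⁿ ‖α‖² ‖T‖)`; in
particular `f^α ∈ dom(E)`, i.e. the energies `E^{(m)}(f^α)` converge. -/
theorem alpha_fractal_finite_energy (q : Fin 3 → E2) (hq : Equidistant q)
    (n : ℕ) (α : (Fin n → Fin 3) → ℝ) (f Tf fα : E2 → ℝ)
    (Tnorm : ℝ) (hTnorm : 0 ≤ Tnorm)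
    (A : ℝ)
    (hA : A = Finset.univ.sup' Finset.univ_nonempty (fun ω : Fin n → Fin 3 => |α ω|))
    (hAle : A ≤ 1 / Real.sqrt (3 * 5 ^ n))
    (hT : Tf (q 0) = f (q 0) ∧ Tf (q 1) = f (q 1) ∧ Tf (q 2) = f (q 2))
    (hself : ∀ ω : Fin n → Fin 3, ∀ x ∈ gasket q,
      fα (Lw q (List.ofFn ω) x) = f (Lw q (List.ofFn ω) x) + α ω * (fα x - Tf x))
    (hfαcont : Continuous fα)
    (Ef ETf : ℝ)
    (hEf : Tendsto (energyM q f) atTop (𝓝 Ef))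
    (hETf : Tendsto (energyM q Tf) atTop (𝓝 ETf))
    (hTbound : ETf ≤ Tnorm * Ef) :
    ∃ Efα : ℝ, Tendsto (energyM q fα) atTop (𝓝 Efα) ∧
      Efα * (1 - 3 * 5 ^ n * A ^ 2) ≤ Ef * (3 + 3 * 5 ^ n * A ^ 2 * Tnorm) :=
  alpha_fractal_finite_energy_general q n α f Tf fα Tnorm A hA hAle hself Ef ETf hEf hETf hTbound
end
end
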